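/- Let n ≥ 0 and let E_0 → E_{-1} → ⋯ → E_{-n} → E_{-n-1} = 0 be a chain of morphisms of bounded spectral sequences, with composite maps φ(i,j): E_{-i} → E_{-j} for i < j. Assume (a) the E_2-page of E_{-i} vanishes outside columns p ∈ [-n, -i], and (b) for each 0 ≤ i ≤ n, the map φ_2^{p,q}(-i, -i-1) is an isomorphism for p ≤ -i-2 and a monomorphism for p = -i-1. Then for every 0 ≤ i ≤ n, the filtration subspace L^{-i} of the abutment of E_0 equals the kernel of the induced map on abutments H_{E_0} → H_{E_{-i-1}}. -/

import Mathlib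

open CategoryTheory

/-- A bounded, convergent, cohomological spectral sequence of abelian groups,
starting at the `E₂`-page.  The field `E r` is the page `E_{r+2}`; `d` is the
differential `E_r^{p,q} → E_r^{p+r, q-r+1}`; `next` identifies the `(r+1)`-st page
with the homology (kernel modulo image) of the `r`-th page; `H` is the graded
abutment, with finite decreasing filtration `L` whose graded pieces
`L^s H^{s+t}/L^{s+1} H^{s+t}` are identified (`stabIso`) with the stable value
`E_∞^{s,t} = E_r^{s,t}` for `r ≥ stab s t`. -/
structure ConvSS : Type 1 where
  E : ℕ → ℤ → ℤ → AddCommGrpCat.{0}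
  d : ∀ (r : ℕ) (p q p' q' : ℤ), p + ((r : ℤ) + 2) = p' → q - ((r : ℤ) + 2) + 1 = q' →
      (↥(E r p q) →+ ↥(E r p' q'))
  d_comp_d : ∀ (r : ℕ) (p q p' q' p'' q'' : ℤ) (h1 : p + ((r : ℤ) + 2) = p')
      (h2 : q - ((r : ℤ) + 2) + 1 = q') (h3 : p' + ((r : ℤ) + 2) = p'')
      (h4 : q' - ((r : ℤ) + 2) + 1 = q''),
      (d r p' q' p'' q'' h3 h4).comp (d r p q p' q' h1 h2) = 0
  next : ∀ (r : ℕ) (p q : ℤ),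
      ↥(E (r + 1) p q) ≃+
        (↥((d r p q (p + ((r : ℤ) + 2)) (q - ((r : ℤ) + 2) + 1) rfl rfl).ker) ⧸
          ((d r (p - ((r : ℤ) + 2)) (q + ((r : ℤ) + 2) - 1) p q (by ring)
              (by ring)).range.addSubgroupOf
            (d r p q (p + ((r : ℤ) + 2)) (q - ((r : ℤ) + 2) + 1) rfl rfl).ker))
  bound : ℕ
  bdd : ∀ (r : ℕ) (p q : ℤ), ((bound : ℤ) < |p| ∨ (bound : ℤ) < |q|) →
      Subsingleton ↥(E r p q)
  H : ℤ → AddCommGrpCat.{0}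
  L : ℤ → (n : ℤ) → AddSubgroup ↥(H n)
  L_antitone : ∀ n : ℤ, Antitone (fun s => L s n)
  L_exhaustive : ∀ n : ℤ, ∃ s : ℤ, L s n = ⊤
  L_separated : ∀ n : ℤ, ∃ s : ℤ, L s n = ⊥
  stab : ℤ → ℤ → ℕ
  stabIso : ∀ (s t : ℤ) (r : ℕ), stab s t ≤ r →
      ((↥(L s (s + t)) ⧸ (L (s + 1) (s + t)).addSubgroupOf (L s (s + t))) ≃+
        ↥(E r s t))

/-- A morphism of convergent spectral sequences: maps on every page commuting with the
differentials and compatible with the passage to the next page (induced map on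
homology), together with a filtered map of abutments compatible with the
identification of the graded pieces with the stable pages. -/
structure ConvSS.Hom (A B : ConvSS) where
  f : ∀ (r : ℕ) (p q : ℤ), ↥(A.E r p q) →+ ↥(B.E r p q)
  comm : ∀ (r : ℕ) (p q p' q' : ℤ) (h1 : p + ((r : ℤ) + 2) = p')
      (h2 : q - ((r : ℤ) + 2) + 1 = q'),
      (f r p' q').comp (A.d r p q p' q' h1 h2) = (B.d r p q p' q' h1 h2).comp (f r p q)
  compat_next : ∀ (r : ℕ) (p q : ℤ)
      (x : ↥((A.d r p q (p + ((r : ℤ) + 2)) (q - ((r : ℤ) + 2) + 1) rfl rfl).ker))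
      (y : ↥((B.d r p q (p + ((r : ℤ) + 2)) (q - ((r : ℤ) + 2) + 1) rfl rfl).ker))
      (_ : (y : ↥(B.E r p q)) = f r p q (x : ↥(A.E r p q)))
      (z : ↥(A.E (r + 1) p q)),
      A.next r p q z = QuotientAddGroup.mk x →
      B.next r p q (f (r + 1) p q z) = QuotientAddGroup.mk y
  h : ∀ n : ℤ, ↥(A.H n) →+ ↥(B.H n)
  filt : ∀ (s n : ℤ), (A.L s n).map (h n) ≤ B.L s n
  compat_abut : ∀ (s t : ℤ) (r : ℕ) (hA : A.stab s t ≤ r) (hB : B.stab s t ≤ r)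
      (x : ↥(A.L s (s + t))) (y : ↥(B.L s (s + t)))
      (_ : (y : ↥(B.H (s + t))) = h (s + t) (x : ↥(A.H (s + t)))),
      B.stabIso s t r hB (QuotientAddGroup.mk y) =
        f r s t (A.stabIso s t r hA (QuotientAddGroup.mk x))

/-- The composite map on abutments `H_{E_0} → H_{E_i}` induced by a chain of morphisms
of spectral sequences `E_0 → E_1 → E_2 → ⋯`. -/
def abutComp (𝔼 : ℕ → ConvSS) (ψ : ∀ i : ℕ, ConvSS.Hom (𝔼 i) (𝔼 (i + 1))) (m : ℤ) :
    ∀ i : ℕ, ↥((𝔼 0).H m) →+ ↥((𝔼 i).H m)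
  | 0 => AddMonoidHom.id _
  | (i + 1) => ((ψ i).h m).comp (abutComp 𝔼 ψ m i)

/-!
`L^{-i} ⊆ ker`: the `E₂`-page of `E_{-i-1}` vanishes in the columns `≥ -i`, so its filtration
step `L^{-i}` is zero, and the filtered maps of abutments carry `L^{-i}` of `E_0` into it.

`ker ⊆ L^{-i}`: by (b) and the comparison argument for spectral sequences, every
`φ(0, -i-1)` is injective on `E_r^{p,q}` for `p ≤ -i-1` and every `r` (injectivity on a column
needs surjectivity `r + 2` columns to the left, which holds with a shift growing in `r`). By (a),
`L^{-n}` is everything; an element of the kernel lying in `L^s` has a class in `E_∞^{s,·}` that maps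
to zero, hence is zero, so the element lies in `L^{s+1}`.
-/

open Function

namespace ConvSS

variable (S : ConvSS)

theorem subsingleton_E_of_subsingleton_E_zero {p : ℤ} (h : ∀ q, Subsingleton (S.E 0 p q)) :
    ∀ (r : ℕ) (q : ℤ), Subsingleton (S.E r p q)
  | 0, q => h q
  | r + 1, q =>
    have := subsingleton_E_of_subsingleton_E_zero h r q
    have : Subsingleton (S.d r p q _ _ rfl rfl).ker := Subtype.coe_injective.subsingleton
    (S.next r p q).toEquiv.subsingleton_congr.2 QuotientAddGroup.mk_surjective.subsingleton

theorem L_eq_L_add_one_of_subsingleton_E {s m : ℤ}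
    (h : ∀ r, Subsingleton (S.E r s (m - s))) : S.L s m = S.L (s + 1) m := by
  obtain ⟨t, rfl⟩ : ∃ t, m = s + t := ⟨m - s, by ring⟩
  rw [add_sub_cancel_left] at h
  refine le_antisymm (fun x hx => ?_) (S.L_antitone _ (le_add_of_nonneg_right zero_le_one))
  have := h (S.stab s t)
  have : Subsingleton (S.L s (s + t) ⧸ (S.L (s + 1) (s + t)).addSubgroupOf (S.L s (s + t))) :=
    (S.stabIso s t _ le_rfl).toEquiv.subsingleton
  exact AddSubgroup.mem_addSubgroupOf.1
    ((QuotientAddGroup.eq_zero_iff (⟨x, hx⟩ : S.L s (s + t))).1 (Subsingleton.elim _ _))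

theorem L_eq_L_add_one_of_column_subsingleton {s : ℤ} (h : ∀ q, Subsingleton (S.E 0 s q))
    (m : ℤ) : S.L s m = S.L (s + 1) m :=
  S.L_eq_L_add_one_of_subsingleton_E fun r => S.subsingleton_E_of_subsingleton_E_zero h r _

theorem L_eq_of_forall_L_eq_L_add_one {a b m : ℤ} (hab : a ≤ b)
    (h : ∀ s, a ≤ s → s < b → S.L s m = S.L (s + 1) m) : S.L a m = S.L b m := by
  induction b, hab using Int.leInduction with
  | base => rfl
  | succ b hab ih => rw [ih fun s hs hsb => h s hs (by omega), h b hab (by omega)]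

theorem L_eq_top_of_columns_subsingleton {s₀ : ℤ}
    (h : ∀ s < s₀, ∀ q, Subsingleton (S.E 0 s q)) (m : ℤ) : S.L s₀ m = ⊤ := by
  obtain ⟨a, ha⟩ := S.L_exhaustive m
  rcases le_or_gt s₀ a with hle | hlt
  · exact top_le_iff.1 (ha ▸ S.L_antitone m hle)
  · rw [← ha, S.L_eq_of_forall_L_eq_L_add_one hlt.le fun s _ hs =>
      S.L_eq_L_add_one_of_column_subsingleton (h s hs) m]

theorem L_eq_bot_of_columns_subsingleton {s₀ : ℤ}
    (h : ∀ s, s₀ ≤ s → ∀ q, Subsingleton (S.E 0 s q)) (m : ℤ) : S.L s₀ m = ⊥ := by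
  obtain ⟨a, ha⟩ := S.L_separated m
  rcases le_or_gt a s₀ with hle | hlt
  · exact le_bot_iff.1 (ha ▸ S.L_antitone m hle)
  · rw [← ha, S.L_eq_of_forall_L_eq_L_add_one hlt.le fun s hs _ =>
      S.L_eq_L_add_one_of_column_subsingleton (h s hs) m]

namespace Hom

variable {A B : ConvSS} (φ : A.Hom B)

theorem comm_apply (r : ℕ) (p q p' q' : ℤ) (h1 : p + ((r : ℤ) + 2) = p')
    (h2 : q - ((r : ℤ) + 2) + 1 = q') (x : A.E r p q) :
    φ.f r p' q' (A.d r p q p' q' h1 h2 x) = B.d r p q p' q' h1 h2 (φ.f r p q x) :=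
  DFunLike.congr_fun (φ.comm r p q p' q' h1 h2) x

theorem injective_f_succ {r : ℕ} {p q : ℤ} (hinj : Injective (φ.f r p q))
    (hsurj : Surjective (φ.f r (p - ((r : ℤ) + 2)) (q + ((r : ℤ) + 2) - 1))) :
    Injective (φ.f (r + 1) p q) := by
  refine (injective_iff_map_eq_zero _).2 fun z hz => ?_
  obtain ⟨x, hx⟩ := QuotientAddGroup.mk_surjective (A.next r p q z)
  have hfx : φ.f r p q x ∈ (B.d r p q _ _ rfl rfl).ker := by
    rw [AddMonoidHom.mem_ker, ← comm_apply, AddMonoidHom.mem_ker.1 x.2, map_zero]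
  have hy := φ.compat_next r p q x ⟨_, hfx⟩ rfl z hx.symm
  rw [hz, map_zero, eq_comm, QuotientAddGroup.eq_zero_iff, AddSubgroup.mem_addSubgroupOf] at hy
  obtain ⟨w, hw⟩ := hy
  obtain ⟨u, rfl⟩ := hsurj w
  have hxu : A.d r _ _ p q (by ring) (by ring) u = x := hinj (by rw [comm_apply]; exact hw)
  apply (A.next r p q).injective
  rw [map_zero, ← hx, QuotientAddGroup.eq_zero_iff, AddSubgroup.mem_addSubgroupOf]
  exact ⟨u, hxu⟩

theorem surjective_f_succ {r : ℕ} {p q : ℤ} (hsurj : Surjective (φ.f r p q))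
    (hinj : Injective (φ.f r (p + ((r : ℤ) + 2)) (q - ((r : ℤ) + 2) + 1))) :
    Surjective (φ.f (r + 1) p q) := by
  intro z
  obtain ⟨y, hy⟩ := QuotientAddGroup.mk_surjective (B.next r p q z)
  obtain ⟨x, hx⟩ := hsurj y
  have hxker : x ∈ (A.d r p q _ _ rfl rfl).ker := by
    refine (injective_iff_map_eq_zero _).1 hinj _ ?_
    rw [comm_apply, hx, AddMonoidHom.mem_ker.1 y.2]
  refine ⟨(A.next r p q).symm (QuotientAddGroup.mk ⟨x, hxker⟩), (B.next r p q).injective ?_⟩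
  rw [φ.compat_next r p q ⟨x, hxker⟩ y hx.symm _ ((A.next r p q).apply_symm_apply _), hy]

theorem injective_and_surjective_f_of_f_zero (c : ℤ)
    (hinj : ∀ p q, p ≤ c - 1 → Injective (φ.f 0 p q))
    (hsurj : ∀ p q, p ≤ c - 2 → Surjective (φ.f 0 p q)) :
    ∀ r : ℕ, (∀ p q, p ≤ c - 1 → Injective (φ.f r p q)) ∧
      (∀ p q, p ≤ c - 2 - r → Surjective (φ.f r p q))
  | 0 => ⟨hinj, fun p q hp => hsurj p q (by simpa using hp)⟩
  | r + 1 =>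
    have ih := injective_and_surjective_f_of_f_zero c hinj hsurj r
    ⟨fun p q hp => φ.injective_f_succ (ih.1 p q hp) (ih.2 _ _ (by omega)),
      fun p q hp => φ.surjective_f_succ (ih.2 p q (by omega)) (ih.1 _ _ (by omega))⟩

end Hom

end ConvSS

def pageComp (𝔼 : ℕ → ConvSS) (ψ : ∀ i : ℕ, ConvSS.Hom (𝔼 i) (𝔼 (i + 1))) (r : ℕ) (p q : ℤ) :
    ∀ k : ℕ, (𝔼 0).E r p q →+ (𝔼 k).E r p q
  | 0 => AddMonoidHom.id _
  | k + 1 => ((ψ k).f r p q).comp (pageComp 𝔼 ψ r p q k)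

section Chain

variable (𝔼 : ℕ → ConvSS) (ψ : ∀ i : ℕ, ConvSS.Hom (𝔼 i) (𝔼 (i + 1)))

theorem injective_pageComp {r : ℕ} {p q : ℤ} :
    ∀ {k : ℕ}, (∀ j < k, Injective ((ψ j).f r p q)) → Injective (pageComp 𝔼 ψ r p q k)
  | 0, _ => injective_id
  | k + 1, h => (h k k.lt_succ_self).comp (injective_pageComp fun j hj => h j (by omega))

theorem abutComp_mem_L {s m : ℤ} {x : (𝔼 0).H m} (hx : x ∈ (𝔼 0).L s m) :
    ∀ k, abutComp 𝔼 ψ m k x ∈ (𝔼 k).L s m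
  | 0 => hx
  | k + 1 => (ψ k).filt s m (AddSubgroup.mem_map_of_mem _ (abutComp_mem_L hx k))

theorem stabIso_mk_abutComp (s t : ℤ) (r : ℕ) :
    ∀ (k : ℕ) (hr : ∀ j ≤ k, (𝔼 j).stab s t ≤ r) (x : (𝔼 0).L s (s + t))
      (y : (𝔼 k).L s (s + t)), (y : (𝔼 k).H (s + t)) = abutComp 𝔼 ψ (s + t) k x →
      (𝔼 k).stabIso s t r (hr k le_rfl) (QuotientAddGroup.mk y) =
        pageComp 𝔼 ψ r s t k ((𝔼 0).stabIso s t r (hr 0 k.zero_le) (QuotientAddGroup.mk x))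
  | 0, _, x, y, hy => by
    obtain rfl : y = x := Subtype.ext hy
    rfl
  | k + 1, hr, x, y, hy => by
    have hx := abutComp_mem_L 𝔼 ψ x.2 k
    rw [(ψ k).compat_abut s t r (hr k k.le_succ) (hr (k + 1) le_rfl) ⟨_, hx⟩ y hy,
      stabIso_mk_abutComp s t r k (fun j hj => hr j (hj.trans k.le_succ)) x ⟨_, hx⟩ rfl]
    rfl

theorem mem_L_add_one_of_abutComp_eq_zero {s m : ℤ} {k : ℕ}
    (hinj : ∀ r, Injective (pageComp 𝔼 ψ r s (m - s) k)) {x : (𝔼 0).H m}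
    (hx : x ∈ (𝔼 0).L s m) (hx₀ : abutComp 𝔼 ψ m k x = 0) : x ∈ (𝔼 0).L (s + 1) m := by
  obtain ⟨t, rfl⟩ : ∃ t, m = s + t := ⟨m - s, by ring⟩
  rw [add_sub_cancel_left] at hinj
  -- a page on which every graded piece along the chain has stabilised
  let r := (Finset.range (k + 1)).sup fun j => (𝔼 j).stab s t
  have hr : ∀ j ≤ k, (𝔼 j).stab s t ≤ r := fun j hj =>
    Finset.le_sup (f := fun j => (𝔼 j).stab s t) (Finset.mem_range.2 (by omega))
  have h := stabIso_mk_abutComp 𝔼 ψ s t r k hr ⟨x, hx⟩ 0 hx₀.symm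
  rw [QuotientAddGroup.mk_zero, map_zero, eq_comm] at h
  have hmk := (AddEquiv.map_eq_zero_iff _).1 ((injective_iff_map_eq_zero _).1 (hinj r) _ h)
  exact AddSubgroup.mem_addSubgroupOf.1 ((QuotientAddGroup.eq_zero_iff _).1 hmk)

theorem L_le_ker_abutComp {s m : ℤ} {k : ℕ} (hbot : (𝔼 k).L s m = ⊥) :
    (𝔼 0).L s m ≤ (abutComp 𝔼 ψ m k).ker := fun _ hx =>
  AddSubgroup.mem_bot.1 (hbot ▸ abutComp_mem_L 𝔼 ψ hx k)

theorem ker_abutComp_le_L {a b m : ℤ} {k : ℕ} (hab : a ≤ b) (htop : (𝔼 0).L a m = ⊤)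
    (hinj : ∀ s, a ≤ s → s < b → ∀ r, Injective (pageComp 𝔼 ψ r s (m - s) k)) :
    (abutComp 𝔼 ψ m k).ker ≤ (𝔼 0).L b m := by
  intro x hx
  induction b, hab using Int.leInduction with
  | base => exact htop ▸ AddSubgroup.mem_top x
  | succ b hab ih =>
    exact mem_L_add_one_of_abutComp_eq_zero 𝔼 ψ (hinj b hab (by omega))
      (ih fun s hs hsb => hinj s hs (by omega)) hx

end Chain

theorem ss_flag_filtration_ker_general (n : ℕ) (𝔼 : ℕ → ConvSS)
    (ψ : ∀ i : ℕ, ConvSS.Hom (𝔼 i) (𝔼 (i + 1)))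
    (ha : ∀ i : ℕ, i ≤ n + 1 → ∀ p q : ℤ,
      (p < -(n : ℤ) ∨ -(i : ℤ) < p) → Subsingleton ↥((𝔼 i).E 0 p q))
    (hb_iso : ∀ i : ℕ, i ≤ n → ∀ p q : ℤ, p ≤ -(i : ℤ) - 2 →
      Function.Bijective ((ψ i).f 0 p q))
    (hb_mono : ∀ i : ℕ, i ≤ n → ∀ q : ℤ,
      Function.Injective ((ψ i).f 0 (-(i : ℤ) - 1) q)) :
    ∀ i : ℕ, i ≤ n → ∀ m : ℤ,
      (𝔼 0).L (-(i : ℤ)) m = (abutComp 𝔼 ψ m (i + 1)).ker := by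
  have hinj : ∀ j ≤ n, ∀ r p q, p ≤ -(j : ℤ) - 1 → Injective ((ψ j).f r p q) := fun j hj r =>
    ((ψ j).injective_and_surjective_f_of_f_zero (-(j : ℤ))
      (fun p q hp => hp.eq_or_lt.elim (fun h => h ▸ hb_mono j hj q)
        fun h => (hb_iso j hj p q (by omega)).1)
      (fun p q hp => (hb_iso j hj p q (by omega)).2) r).1
  intro i hi m
  apply le_antisymm
  · refine L_le_ker_abutComp 𝔼 ψ ((𝔼 (i + 1)).L_eq_bot_of_columns_subsingleton ?_ m)
    exact fun s hs q => ha (i + 1) (by omega) s q (Or.inr (by omega))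
  · refine ker_abutComp_le_L 𝔼 ψ (a := -n) (by omega)
      ((𝔼 0).L_eq_top_of_columns_subsingleton (fun s hs q => ha 0 (by omega) s q (Or.inl hs)) m)
      fun s _ hs r => injective_pageComp 𝔼 ψ fun j hj => hinj j (by omega) r s _ (by omega)

/-- Let `n ≥ 0` and `E_0 → E_{-1} → ⋯ → E_{-n} → E_{-n-1} = 0` be a
chain of morphisms of bounded spectral sequences (here `𝔼 i` denotes `E_{-i}` and `ψ i`
the morphism `E_{-i} → E_{-i-1}`).  Assume (a) the `E₂`-page of `E_{-i}` vanishes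
outside the columns `p ∈ [-n, -i]`, and (b) for each `0 ≤ i ≤ n` the map
`φ₂^{p,q}(-i, -i-1)` is an isomorphism for `p ≤ -i-2` and a monomorphism for
`p = -i-1`.  Then for every `0 ≤ i ≤ n` the filtration subspace `L^{-i}` of the
abutment of `E_0` equals the kernel of the induced map `H_{E_0} → H_{E_{-i-1}}`. -/
theorem ss_flag_filtration_ker (n : ℕ) (𝔼 : ℕ → ConvSS)
    (ψ : ∀ i : ℕ, ConvSS.Hom (𝔼 i) (𝔼 (i + 1)))
    (hlast : ∀ (r : ℕ) (p q : ℤ), Subsingleton ↥((𝔼 (n + 1)).E r p q))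
    (ha : ∀ i : ℕ, i ≤ n + 1 → ∀ p q : ℤ,
      (p < -(n : ℤ) ∨ -(i : ℤ) < p) → Subsingleton ↥((𝔼 i).E 0 p q))
    (hb_iso : ∀ i : ℕ, i ≤ n → ∀ p q : ℤ, p ≤ -(i : ℤ) - 2 →
      Function.Bijective ((ψ i).f 0 p q))
    (hb_mono : ∀ i : ℕ, i ≤ n → ∀ q : ℤ,
      Function.Injective ((ψ i).f 0 (-(i : ℤ) - 1) q)) :
    ∀ i : ℕ, i ≤ n → ∀ m : ℤ,
      (𝔼 0).L (-(i : ℤ)) m = (abutComp 𝔼 ψ m (i + 1)).ker :=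
  ss_flag_filtration_ker_general n 𝔼 ψ ha hb_iso hb_mono
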